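/- Let G be a finite group and let I be a structure subgroup with δ_G(I) = k ≥ 1. Then every structure subgroup J that is an option of X_I satisfies δ_G(J) ∈ {k−1, k}, and there exists an option X_J of X_I with δ_G(J) = k−1. -/

import Mathlib

/-- ⌈P⌉: the intersection of all maximal subgroups of `G` containing `P`
(equal to `G`, i.e. `⊤`, if no maximal subgroup contains `P`). -/
def ceilSet {G : Type*} [Group G] (P : Set G) : Subgroup G :=
  sInf {M : Subgroup G | IsCoatom M ∧ P ⊆ (M : Set G)}

/-- The deficiency of a subset `S` of a finite group `G`: the minimum size of a
subset `Q` of `G` such that `S ∪ Q` generates `G`. -/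
noncomputable def deficiency {G : Type*} [Group G] [Fintype G] (S : Set G) : ℕ :=
  sInf {n : ℕ | ∃ Q : Finset G, Q.card = n ∧ Subgroup.closure (S ∪ (Q : Set G)) = ⊤}

/-- The structure class `X_J` is an option of the structure class `X_I`. -/
def IsStructOption {G : Type*} [Group G] (I J : Subgroup G) : Prop :=
  ∃ g ∉ I, ceilSet ((I : Set G) ∪ {g}) = J

/-!
Adjoining one element `g` to a set `S` lowers the deficiency by at most one, since `g` may be
added to any completing set of `S ∪ {g}`; and removing any `g` from a minimum completing set `Q`
of `S` leaves a completing set of `S ∪ {g}`, so that such a `g` lowers the deficiency by exactly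
one (and does not lie in `S`, by minimality of `Q`). Passing from `S` to `⌈S⌉` does not change
the deficiency, because a subset generates `G` iff it lies in no maximal subgroup.
-/

open Subgroup

section

variable {G : Type*} [Group G]

lemma subset_ceilSet (S : Set G) : S ⊆ (ceilSet S : Set G) :=
  fun _ hx => mem_sInf.2 fun _ hM => hM.2 hx

lemma closure_eq_top_of_subset {A B : Set G} (hA : closure A = ⊤) (hAB : A ⊆ B) :
    closure B = ⊤ :=
  top_unique (hA ▸ closure_mono hAB)

lemma closure_ceilSet_union_eq_top_iff [Finite G] (S T : Set G) :
    closure ((ceilSet S : Set G) ∪ T) = ⊤ ↔ closure (S ∪ T) = ⊤ := by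
  refine ⟨fun h => ?_, fun h => closure_eq_top_of_subset h
    (Set.union_subset_union_left _ (subset_ceilSet S))⟩
  by_contra hne
  obtain ⟨M, hM, hle⟩ := (eq_top_or_exists_le_coatom (closure (S ∪ T))).resolve_left hne
  have hST : S ∪ T ⊆ M := subset_closure.trans hle
  have hceil : ceilSet S ≤ M := sInf_le ⟨hM, Set.subset_union_left.trans hST⟩
  refine hM.1 (top_unique ?_)
  rw [← h, closure_le]
  exact Set.union_subset hceil (Set.subset_union_right.trans hST)

variable [Fintype G]

lemma exists_card_eq_deficiency (S : Set G) :
    ∃ Q : Finset G, Q.card = deficiency S ∧ closure (S ∪ (Q : Set G)) = ⊤ :=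
  Nat.sInf_mem (s := {n | ∃ Q : Finset G, Q.card = n ∧ closure (S ∪ (Q : Set G)) = ⊤})
    ⟨_, Finset.univ, rfl, by simp⟩

lemma deficiency_le_card {S : Set G} {Q : Finset G} (h : closure (S ∪ (Q : Set G)) = ⊤) :
    deficiency S ≤ Q.card :=
  Nat.sInf_le ⟨Q, rfl, h⟩

lemma deficiency_anti {S T : Set G} (h : S ⊆ T) : deficiency T ≤ deficiency S := by
  obtain ⟨Q, hcard, hQ⟩ := exists_card_eq_deficiency S
  exact hcard ▸ deficiency_le_card
    (closure_eq_top_of_subset hQ (Set.union_subset_union_left _ h))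

lemma deficiency_ceilSet (S : Set G) : deficiency (ceilSet S : Set G) = deficiency S := by
  simp only [deficiency, closure_ceilSet_union_eq_top_iff]

lemma deficiency_le_deficiency_union_singleton_add_one (S : Set G) (g : G) :
    deficiency S ≤ deficiency (S ∪ {g}) + 1 := by
  classical
  obtain ⟨Q, hcard, hQ⟩ := exists_card_eq_deficiency (S ∪ {g})
  have hgen : closure (S ∪ (↑(insert g Q) : Set G)) = ⊤ :=
    closure_eq_top_of_subset hQ (by
      intro x
      simp only [Finset.coe_insert, Set.mem_union, Set.mem_insert_iff, Set.mem_singleton_iff]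
      tauto)
  calc deficiency S ≤ (insert g Q).card := deficiency_le_card hgen
    _ ≤ Q.card + 1 := Finset.card_insert_le g Q
    _ = deficiency (S ∪ {g}) + 1 := by rw [hcard]

lemma deficiency_union_singleton_le_card_erase [DecidableEq G] {S : Set G} {Q : Finset G}
    (hQ : closure (S ∪ (Q : Set G)) = ⊤) (g : G) :
    deficiency (S ∪ {g}) ≤ (Q.erase g).card :=
  deficiency_le_card (closure_eq_top_of_subset hQ (by
    intro x
    simp only [Finset.coe_erase, Set.mem_union, Set.mem_sdiff, Set.mem_singleton_iff]
    tauto))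

lemma deficiency_union_singleton_mem_Icc (S : Set G) (g : G) :
    deficiency (S ∪ {g}) ∈ Set.Icc (deficiency S - 1) (deficiency S) :=
  ⟨by have := deficiency_le_deficiency_union_singleton_add_one S g; omega,
    deficiency_anti Set.subset_union_left⟩

lemma exists_notMem_deficiency_union_singleton_eq {S : Set G} (hS : deficiency S ≠ 0) :
    ∃ g ∉ S, deficiency (S ∪ {g}) = deficiency S - 1 := by
  classical
  obtain ⟨Q, hcard, hQ⟩ := exists_card_eq_deficiency S
  obtain ⟨g, hgQ⟩ := Finset.card_pos.1 (hcard ▸ Nat.pos_of_ne_zero hS)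
  have hle : deficiency (S ∪ {g}) ≤ deficiency S - 1 := by
    simpa [Finset.card_erase_of_mem hgQ, hcard] using deficiency_union_singleton_le_card_erase hQ g
  refine ⟨g, fun hgS => ?_, le_antisymm hle (deficiency_union_singleton_mem_Icc S g).1⟩
  rw [Set.union_singleton, Set.insert_eq_of_mem hgS] at hle
  omega

end

theorem options_deficiency_general {G : Type*} [Group G] [Fintype G]
    (I : Subgroup G)
    (k : ℕ) (hk : 1 ≤ k) (hdef : deficiency (I : Set G) = k) :
    (∀ J : Subgroup G, IsStructOption I J →
      deficiency (J : Set G) = k - 1 ∨ deficiency (J : Set G) = k) ∧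
    (∃ J : Subgroup G, IsStructOption I J ∧ deficiency (J : Set G) = k - 1) := by
  constructor
  · rintro J ⟨g, -, rfl⟩
    have hg := deficiency_union_singleton_mem_Icc (I : Set G) g
    rw [hdef, Set.mem_Icc] at hg
    rw [deficiency_ceilSet]
    omega
  · obtain ⟨g, hg, hgdef⟩ := exists_notMem_deficiency_union_singleton_eq (S := (I : Set G))
      (by omega)
    exact ⟨_, ⟨g, hg, rfl⟩, by rw [deficiency_ceilSet, hgdef, hdef]⟩

/-- If `X_I` has deficiency `k ≥ 1`, then every option of `X_I` has deficiency
`k-1` or `k`, and some option has deficiency `k-1`. -/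
theorem options_deficiency {G : Type*} [Group G] [Fintype G]
    (I : Subgroup G) (hI : ceilSet (I : Set G) = I)
    (k : ℕ) (hk : 1 ≤ k) (hdef : deficiency (I : Set G) = k) :
    (∀ J : Subgroup G, IsStructOption I J →
      deficiency (J : Set G) = k - 1 ∨ deficiency (J : Set G) = k) ∧
    (∃ J : Subgroup G, IsStructOption I J ∧ deficiency (J : Set G) = k - 1) :=
  options_deficiency_general I k hk hdef
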